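/- Let ρ be a separable bipartite density matrix on ℂ^{d_A}⊗ℂ^{d_B}. Then its correlation matrix satisfies ‖T‖_tr ≤ √( (d_A − 1)(d_B − 1) / (κ_A κ_B d_A d_B) ); in particular ‖T‖_tr ≤ 1. -/

import Mathlib

/-!
For a separable state `ρ = ∑ₙ pₙ ρₙᴬ ⊗ ρₙᴮ`, orthogonality of the `Gᵢᴬ ⊗ Gⱼᴮ` gives
`T = ∑ₙ pₙ αₙ βₙᵀ`, where `αₙ, βₙ` are the Bloch vectors of `ρₙᴬ, ρₙᴮ`. Evaluating the trace norm
on the right singular vectors of `T`, Cauchy–Schwarz and Bessel give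
`‖∑ₙ aₙ bₙᵀ‖_tr ≤ ∑ₙ ‖aₙ‖ ‖bₙ‖`. Finally Parseval, applied to the traceless part `ρ - I / d` of a
state on `ℂ^d`, gives `κ ‖α‖² = tr ρ² - 1 / d ≤ 1 - 1 / d`.
-/

open Matrix BigOperators Kronecker
open scoped ComplexOrder

/-- The trace norm (sum of singular values) of a complex matrix. -/
noncomputable def traceNorm {m k : Type*} [Fintype m] [Fintype k] [DecidableEq k]
    (X : Matrix m k ℂ) : ℝ :=
  ∑ i, Real.sqrt ((Matrix.isHermitian_conjTranspose_mul_self X).eigenvalues i)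

/-- A density matrix: positive semidefinite with trace one. -/
def IsDensityMatrix {d : Type*} [Fintype d] [DecidableEq d] (ρ : Matrix d d ℂ) : Prop :=
  ρ.PosSemidef ∧ ρ.trace = 1

/-- Separability of a bipartite state (finite convex mixture of product density matrices). -/
def IsSeparableState (dA dB : ℕ)
    (ρ : Matrix (Fin dA × Fin dB) (Fin dA × Fin dB) ℂ) : Prop :=
  ∃ (N : ℕ) (p : Fin N → ℝ) (ρA : Fin N → Matrix (Fin dA) (Fin dA) ℂ)
    (ρB : Fin N → Matrix (Fin dB) (Fin dB) ℂ),
    (∀ i, 0 ≤ p i) ∧ (∑ i, p i) = 1 ∧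
    (∀ i, IsDensityMatrix (ρA i)) ∧ (∀ i, IsDensityMatrix (ρB i)) ∧
    ρ = ∑ i, (p i : ℂ) • (ρA i ⊗ₖ ρB i)

open scoped InnerProductSpace

section InnerProduct

variable {𝕜 E F ι ν : Type*} [RCLike 𝕜] [NormedAddCommGroup E] [InnerProductSpace 𝕜 E]
  [NormedAddCommGroup F] [InnerProductSpace 𝕜 F] [Fintype ι] [Fintype ν]

-- A zero vector contributes `0 / 0 = 0`.
theorem sum_norm_inner_sq_div_le_of_pairwise_inner_eq_zero {x : ι → E}
    (hx : Pairwise fun i j => ⟪x i, x j⟫_𝕜 = 0) (a : E) :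
    ∑ i, ‖⟪x i, a⟫_𝕜‖ ^ 2 / ‖x i‖ ^ 2 ≤ ‖a‖ ^ 2 := by
  classical
  set e : {i // x i ≠ 0} → E := fun i => (‖x i‖⁻¹ : 𝕜) • x i
  have he : Orthonormal 𝕜 e := by
    refine orthonormal_iff_ite.mpr fun i j => ?_
    by_cases hij : i = j
    · subst hij
      simp [e, inner_self_eq_norm_sq_to_K, i.2]
    · simp [e, inner_smul_left, inner_smul_right, hx (Subtype.coe_ne_coe.mpr hij), hij]
  calc ∑ i, ‖⟪x i, a⟫_𝕜‖ ^ 2 / ‖x i‖ ^ 2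
      = ∑ i : {i // x i ≠ 0}, ‖⟪e i, a⟫_𝕜‖ ^ 2 := by
        rw [← Finset.sum_filter_of_ne (p := fun i => x i ≠ 0) (by aesop),
          Finset.sum_subtype (p := fun i => x i ≠ 0) (F := inferInstance) _ (by simp)]
        simp [e, inner_smul_left, div_eq_inv_mul, mul_pow]
    _ ≤ ‖a‖ ^ 2 := he.sum_inner_products_le a

theorem sum_norm_le_sum_norm_mul_norm {v : ι → F} (hv : Orthonormal 𝕜 v) {x : ι → E}
    (hx : Pairwise fun i j => ⟪x i, x j⟫_𝕜 = 0) (a : ν → E) (b : ν → F)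
    (hxab : ∀ i, x i = ∑ n, ⟪b n, v i⟫_𝕜 • a n) :
    ∑ i, ‖x i‖ ≤ ∑ n, ‖a n‖ * ‖b n‖ := by
  have hpoint : ∀ i, ‖x i‖ ≤ ∑ n, ‖⟪x i, a n⟫_𝕜‖ / ‖x i‖ * ‖⟪v i, b n⟫_𝕜‖ := by
    intro i
    rcases eq_or_ne (x i) 0 with h | h
    · simp [h]
    have hsq : ‖x i‖ ^ 2 ≤ ∑ n, ‖⟪x i, a n⟫_𝕜‖ * ‖⟪v i, b n⟫_𝕜‖ := by
      calc ‖x i‖ ^ 2 = RCLike.re ⟪x i, x i⟫_𝕜 := (inner_self_eq_norm_sq (𝕜 := 𝕜) _).symm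
        _ = ∑ n, RCLike.re (⟪b n, v i⟫_𝕜 * ⟪x i, a n⟫_𝕜) := by
          nth_rewrite 2 [hxab i]
          simp only [inner_sum, inner_smul_right, map_sum]
        _ ≤ ∑ n, ‖⟪x i, a n⟫_𝕜‖ * ‖⟪v i, b n⟫_𝕜‖ := by
          gcongr with n
          exact (RCLike.re_le_norm _).trans_eq (by rw [norm_mul, norm_inner_symm, mul_comm])
    have hpos : 0 < ‖x i‖ := norm_pos_iff.mpr h
    calc ‖x i‖ = ‖x i‖ ^ 2 / ‖x i‖ := by field_simp
      _ ≤ (∑ n, ‖⟪x i, a n⟫_𝕜‖ * ‖⟪v i, b n⟫_𝕜‖) / ‖x i‖ := by gcongr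
      _ = ∑ n, ‖⟪x i, a n⟫_𝕜‖ / ‖x i‖ * ‖⟪v i, b n⟫_𝕜‖ := by
        rw [Finset.sum_div]
        exact Finset.sum_congr rfl fun n _ => div_mul_eq_mul_div _ _ _ |>.symm
  have hbessel_a : ∀ n, √(∑ i, (‖⟪x i, a n⟫_𝕜‖ / ‖x i‖) ^ 2) ≤ ‖a n‖ := fun n =>
    Real.sqrt_le_sqrt (by simpa only [div_pow] using
      sum_norm_inner_sq_div_le_of_pairwise_inner_eq_zero hx (a n))
      |>.trans_eq (Real.sqrt_sq (norm_nonneg _))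
  have hbessel_b : ∀ n, √(∑ i, ‖⟪v i, b n⟫_𝕜‖ ^ 2) ≤ ‖b n‖ := fun n =>
    Real.sqrt_le_sqrt (hv.sum_inner_products_le (b n)) |>.trans_eq (Real.sqrt_sq (norm_nonneg _))
  calc ∑ i, ‖x i‖ ≤ ∑ i, ∑ n, ‖⟪x i, a n⟫_𝕜‖ / ‖x i‖ * ‖⟪v i, b n⟫_𝕜‖ :=
        Finset.sum_le_sum fun i _ => hpoint i
    _ = ∑ n, ∑ i, ‖⟪x i, a n⟫_𝕜‖ / ‖x i‖ * ‖⟪v i, b n⟫_𝕜‖ := Finset.sum_comm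
    _ ≤ ∑ n, √(∑ i, (‖⟪x i, a n⟫_𝕜‖ / ‖x i‖) ^ 2) * √(∑ i, ‖⟪v i, b n⟫_𝕜‖ ^ 2) := by
        gcongr with n
        exact Real.sum_mul_le_sqrt_mul_sqrt _ _ _
    _ ≤ ∑ n, ‖a n‖ * ‖b n‖ := by
        gcongr with n
        exacts [hbessel_a n, hbessel_b n]

end InnerProduct

section TraceNorm

variable {m k : Type*} [Fintype m] [Fintype k] [DecidableEq k]

theorem exists_orthonormal_traceNorm_eq_sum_norm (X : Matrix m k ℂ) :
    ∃ v : k → EuclideanSpace ℂ k, Orthonormal ℂ v ∧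
      (Pairwise fun i j => ⟪toEuclideanLin X (v i), toEuclideanLin X (v j)⟫_ℂ = 0) ∧
      traceNorm X = ∑ i, ‖toEuclideanLin X (v i)‖ := by
  classical
  set hH := isHermitian_conjTranspose_mul_self X
  set v := hH.eigenvectorBasis
  have hinner : ∀ i j, ⟪toEuclideanLin X (v i), toEuclideanLin X (v j)⟫_ℂ =
      if i = j then (hH.eigenvalues j : ℂ) else 0 := by
    intro i j
    have heig : toEuclideanLin Xᴴ (toEuclideanLin X (v j)) = (hH.eigenvalues j : ℂ) • v j := by
      apply WithLp.ofLp_injective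
      rw [ofLp_toLpLin, ofLp_toLpLin, toLin'_apply, toLin'_apply, mulVec_mulVec, WithLp.ofLp_smul,
        Complex.coe_smul]
      exact hH.mulVec_eigenvectorBasis j
    rw [← LinearMap.adjoint_inner_right, ← toEuclideanLin_conjTranspose_eq_adjoint, heig,
      inner_smul_right, orthonormal_iff_ite.mp v.orthonormal]
    simp
  refine ⟨v, v.orthonormal, fun i j hij => by simp [hinner, hij], ?_⟩
  refine Finset.sum_congr rfl fun i _ => ?_
  rw [norm_eq_sqrt_re_inner (𝕜 := ℂ), hinner]
  simp

theorem traceNorm_sum_vecMulVec_le {ν : Type*} [Fintype ν] (a : ν → EuclideanSpace ℂ m)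
    (b : ν → EuclideanSpace ℂ k) :
    traceNorm (∑ n, vecMulVec (a n).ofLp (b n).ofLp) ≤ ∑ n, ‖a n‖ * ‖b n‖ := by
  obtain ⟨v, hv, horth, htr⟩ :=
    exists_orthonormal_traceNorm_eq_sum_norm (∑ n, vecMulVec (a n).ofLp (b n).ofLp)
  have hb : ∀ n, ‖(WithLp.toLp 2 (star (b n).ofLp) : EuclideanSpace ℂ k)‖ = ‖b n‖ := by
    simp [EuclideanSpace.norm_eq]
  rw [htr]
  refine (sum_norm_le_sum_norm_mul_norm hv horth a (fun n => WithLp.toLp 2 (star (b n).ofLp))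
    fun i => ?_).trans_eq (by simp only [hb])
  apply WithLp.ofLp_injective
  simp [vecMulVec_mulVec, EuclideanSpace.inner_eq_star_dotProduct, dotProduct_comm]

theorem traceNorm_sum_smul_vecMulVec_le {ν : Type*} [Fintype ν] {p : ν → ℝ} (hp : ∀ n, 0 ≤ p n)
    (hpsum : ∑ n, p n = 1) {a : ν → EuclideanSpace ℂ m} {b : ν → EuclideanSpace ℂ k} {α β : ℝ}
    (ha : ∀ n, ‖a n‖ ≤ α) (hb : ∀ n, ‖b n‖ ≤ β) :
    traceNorm (∑ n, vecMulVec ((p n : ℂ) • a n).ofLp (b n).ofLp) ≤ α * β :=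
  calc traceNorm (∑ n, vecMulVec ((p n : ℂ) • a n).ofLp (b n).ofLp)
      ≤ ∑ n, ‖(p n : ℂ) • a n‖ * ‖b n‖ := traceNorm_sum_vecMulVec_le _ _
    _ ≤ ∑ n, p n * (α * β) := by
        refine Finset.sum_le_sum fun n _ => ?_
        rw [norm_smul, Complex.norm_real, Real.norm_of_nonneg (hp n), mul_assoc]
        exact mul_le_mul_of_nonneg_left
          (mul_le_mul (ha n) (hb n) (norm_nonneg _) ((norm_nonneg _).trans (ha n))) (hp n)
    _ = α * β := by rw [← Finset.sum_mul, hpsum, one_mul]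

end TraceNorm

theorem trace_conjTranspose_kronecker_mul_kronecker {R l m n p : Type*} [CommSemiring R]
    [StarRing R] [Fintype l] [Fintype m] [Fintype n] [Fintype p]
    (A C : Matrix l m R) (B D : Matrix n p R) :
    ((A ⊗ₖ B)ᴴ * (C ⊗ₖ D)).trace = (Aᴴ * C).trace * (Bᴴ * D).trace := by
  rw [conjTranspose_kronecker, ← mul_kronecker_mul, trace_kronecker]

section HilbertSchmidt

variable {d ι : Type*} [Fintype d] [Fintype ι] [DecidableEq ι] {G : ι → Matrix d d ℂ} {κ : ℂ}

theorem trace_conjTranspose_mul_sum_smul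
    (hG : ∀ i j, ((G i)ᴴ * G j).trace = if i = j then κ else 0) (c : ι → ℂ) (i : ι) :
    ((G i)ᴴ * ∑ j, c j • G j).trace = κ * c i := by
  simp [Matrix.mul_sum, trace_sum, hG, mul_comm]

theorem sum_norm_trace_conjTranspose_mul_sq {κ : ℝ}
    (hG : ∀ i j, ((G i)ᴴ * G j).trace = if i = j then (κ : ℂ) else 0) {X : Matrix d d ℂ}
    (hX : X ∈ Submodule.span ℂ (Set.range G)) :
    ∑ i, ‖((G i)ᴴ * X).trace‖ ^ 2 = κ * ((Xᴴ * X).trace).re := by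
  obtain ⟨c, rfl⟩ := Submodule.mem_span_range_iff_exists_fun ℂ |>.mp hX
  have hcoef := trace_conjTranspose_mul_sum_smul hG c
  have hXX : ((∑ j, c j • G j)ᴴ * ∑ j, c j • G j).trace = ∑ j, star (c j) * (κ * c j) := by
    rw [conjTranspose_sum, Finset.sum_mul, trace_sum]
    simp only [conjTranspose_smul, Matrix.smul_mul, trace_smul, hcoef, smul_eq_mul]
  rw [hXX, Complex.re_sum, Finset.mul_sum]
  refine Finset.sum_congr rfl fun j _ => ?_
  rw [hcoef, mul_left_comm, Complex.star_def, Complex.conj_mul']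
  simp [mul_pow, sq_abs, ← Complex.ofReal_pow]
  ring

variable [DecidableEq d]

theorem Matrix.IsHermitian.trace_mul_self_eq_sum_sq {A : Matrix d d ℂ} (hA : A.IsHermitian) :
    (A * A).trace = ∑ i, ((hA.eigenvalues i ^ 2 : ℝ) : ℂ) := by
  conv_lhs => rw [hA.spectral_theorem]
  rw [← map_mul, Unitary.conjStarAlgAut_apply, trace_mul_cycle, Unitary.coe_star_mul_self,
    one_mul, diagonal_mul_diagonal, trace_diagonal]
  simp [sq]

theorem IsDensityMatrix.re_trace_mul_self_le_one {ρ : Matrix d d ℂ} (hρ : IsDensityMatrix ρ) :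
    ((ρ * ρ).trace).re ≤ 1 := by
  obtain ⟨hpsd, htr⟩ := hρ
  have hsum : ∑ i, hpsd.1.eigenvalues i = 1 := by
    have h := hpsd.1.trace_eq_sum_eigenvalues
    rw [htr] at h
    simpa using congrArg Complex.re h.symm
  rw [hpsd.1.trace_mul_self_eq_sum_sq, Complex.re_sum]
  simp only [Complex.ofReal_re]
  calc ∑ i, hpsd.1.eigenvalues i ^ 2 ≤ (∑ i, hpsd.1.eigenvalues i) ^ 2 :=
        Finset.sum_sq_le_sq_sum_of_nonneg fun i _ => hpsd.eigenvalues_nonneg i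
    _ = 1 := by rw [hsum, one_pow]

-- For a state `ρ`, the coordinates of `ρ - I / d` in the orthogonal basis `G`.
noncomputable def blochVector (G : ι → Matrix d d ℂ) (κ : ℝ) (ρ : Matrix d d ℂ) :
    EuclideanSpace ℂ ι :=
  WithLp.toLp 2 fun i => ((G i)ᴴ * ρ).trace / κ

theorem IsDensityMatrix.norm_blochVector_le {κ : ℝ} (hκ : 0 < κ) (hGtr : ∀ i, (G i).trace = 0)
    (hG : ∀ i j, ((G i)ᴴ * G j).trace = if i = j then (κ : ℂ) else 0)
    (hspan : ∀ X : Matrix d d ℂ, X.trace = 0 → X ∈ Submodule.span ℂ (Set.range G))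
    {ρ : Matrix d d ℂ} (hρ : IsDensityMatrix ρ) :
    ‖blochVector G κ ρ‖ ≤ √(((Fintype.card d : ℝ) - 1) / (κ * Fintype.card d)) := by
  have hd : Fintype.card d ≠ 0 := by
    intro h
    have : IsEmpty d := Fintype.card_eq_zero_iff.mp h
    simpa [Matrix.trace] using hρ.2
  set X := ρ - (Fintype.card d : ℂ)⁻¹ • 1
  have hXtr : X.trace = 0 := by simp [X, hρ.2, hd]
  have hcoef : ∀ i, ((G i)ᴴ * ρ).trace = ((G i)ᴴ * X).trace := by
    simp [X, Matrix.mul_sub, hGtr]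
  have hXX : ((Xᴴ * X).trace).re = ((ρ * ρ).trace).re - (Fintype.card d : ℝ)⁻¹ := by
    have hXH : Xᴴ = X := by simp [X, hρ.1.1.eq]
    have h : (X * X).trace = (ρ * ρ).trace - (Fintype.card d : ℂ)⁻¹ := by
      simp only [X, sub_mul, mul_sub, Matrix.smul_mul, Matrix.mul_smul, one_mul, mul_one,
        trace_sub, trace_smul, trace_one, hρ.2, smul_eq_mul]
      field_simp
      ring
    rw [hXH, h]
    simp
  have hsum : ∑ i, ‖((G i)ᴴ * ρ).trace‖ ^ 2 =
      κ * (((ρ * ρ).trace).re - (Fintype.card d : ℝ)⁻¹) := by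
    simp_rw [hcoef]
    rw [sum_norm_trace_conjTranspose_mul_sq hG (hspan X hXtr), hXX]
  rw [EuclideanSpace.norm_eq]
  apply Real.sqrt_le_sqrt
  simp only [blochVector, norm_div, Complex.norm_real, Real.norm_of_nonneg hκ.le, div_pow]
  rw [← Finset.sum_div, hsum]
  calc κ * (((ρ * ρ).trace).re - (Fintype.card d : ℝ)⁻¹) / κ ^ 2
      = (((ρ * ρ).trace).re - (Fintype.card d : ℝ)⁻¹) / κ := by field_simp
    _ ≤ (1 - (Fintype.card d : ℝ)⁻¹) / κ := by gcongr; exact hρ.re_trace_mul_self_le_one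
    _ = ((Fintype.card d : ℝ) - 1) / (κ * Fintype.card d) := by field_simp

end HilbertSchmidt

section Correlation

variable {a b ι ι' : Type*} [Fintype a] [DecidableEq a] [Fintype b] [DecidableEq b]
  [Fintype ι] [DecidableEq ι] [Fintype ι'] [DecidableEq ι']
  {GA : ι → Matrix a a ℂ} {GB : ι' → Matrix b b ℂ}

theorem trace_conjTranspose_kronecker_mul_expansion {κA κB : ℂ}
    (hGAtr : ∀ i, (GA i).trace = 0) (hGBtr : ∀ j, (GB j).trace = 0)
    (hGAorth : ∀ i j, ((GA i)ᴴ * GA j).trace = if i = j then κA else 0)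
    (hGBorth : ∀ i j, ((GB i)ᴴ * GB j).trace = if i = j then κB else 0)
    (cA cB : ℂ) (r : ι → ℂ) (s : ι' → ℂ) (T : Matrix ι ι' ℂ) (i : ι) (j : ι') :
    ((GA i ⊗ₖ GB j)ᴴ * ((cA • (1 : Matrix a a ℂ)) ⊗ₖ (cB • (1 : Matrix b b ℂ))
      + ∑ k, r k • (GA k ⊗ₖ (cB • (1 : Matrix b b ℂ)))
      + ∑ l, s l • ((cA • (1 : Matrix a a ℂ)) ⊗ₖ GB l)
      + ∑ k, ∑ l, T k l • (GA k ⊗ₖ GB l))).trace = κA * κB * T i j := by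
  simp [Matrix.mul_add, Matrix.mul_sum, trace_sum, trace_conjTranspose_kronecker_mul_kronecker,
    hGAtr, hGBtr, hGAorth, hGBorth]
  ring

theorem correlation_eq_sum_vecMulVec_blochVector {κA κB : ℝ} (hκA : κA ≠ 0) (hκB : κB ≠ 0)
    (hGAtr : ∀ i, (GA i).trace = 0) (hGBtr : ∀ j, (GB j).trace = 0)
    (hGAorth : ∀ i j, ((GA i)ᴴ * GA j).trace = if i = j then (κA : ℂ) else 0)
    (hGBorth : ∀ i j, ((GB i)ᴴ * GB j).trace = if i = j then (κB : ℂ) else 0)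
    {ν : Type*} [Fintype ν] (p : ν → ℝ) (ρA : ν → Matrix a a ℂ) (ρB : ν → Matrix b b ℂ)
    (cA cB : ℂ) (r : ι → ℂ) (s : ι' → ℂ) (T : Matrix ι ι' ℂ)
    (hexp : ∑ n, (p n : ℂ) • (ρA n ⊗ₖ ρB n) =
      (cA • (1 : Matrix a a ℂ)) ⊗ₖ (cB • (1 : Matrix b b ℂ))
      + ∑ k, r k • (GA k ⊗ₖ (cB • (1 : Matrix b b ℂ)))
      + ∑ l, s l • ((cA • (1 : Matrix a a ℂ)) ⊗ₖ GB l)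
      + ∑ k, ∑ l, T k l • (GA k ⊗ₖ GB l)) :
    T = ∑ n, vecMulVec ((p n : ℂ) • blochVector GA κA (ρA n)).ofLp
      (blochVector GB κB (ρB n)).ofLp := by
  ext i j
  have h := congrArg (fun M => ((GA i ⊗ₖ GB j)ᴴ * M).trace) hexp
  simp only [trace_conjTranspose_kronecker_mul_expansion hGAtr hGBtr hGAorth hGBorth,
    Matrix.mul_sum, Matrix.mul_smul, trace_sum, trace_smul,
    trace_conjTranspose_kronecker_mul_kronecker] at h
  have hκ : (κA : ℂ) * κB ≠ 0 := by exact_mod_cast mul_ne_zero hκA hκB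
  simp only [blochVector, Matrix.sum_apply, vecMulVec_apply, WithLp.ofLp_smul, Pi.smul_apply,
    smul_eq_mul] at h ⊢
  rw [← mul_right_inj' hκ, ← h, Finset.mul_sum]
  refine Finset.sum_congr rfl fun n _ => ?_
  field_simp

end Correlation

theorem sub_one_div_mul_nonneg (d : ℕ) {κ : ℝ} (hκ : 0 ≤ κ) : 0 ≤ ((d : ℝ) - 1) / (κ * d) := by
  rcases Nat.eq_zero_or_pos d with rfl | hd
  · simp
  · exact div_nonneg (sub_nonneg.mpr (by exact_mod_cast hd)) (by positivity)

theorem sub_one_div_mul_le_one (d : ℕ) {κ : ℝ} (hκ : 1 ≤ κ) : ((d : ℝ) - 1) / (κ * d) ≤ 1 :=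
  div_le_one_of_le₀ (by nlinarith [(Nat.cast_nonneg d : (0 : ℝ) ≤ d)]) (by positivity)

theorem traceNorm_correlation_matrix_le_of_separable_general
    (dA dB : ℕ)
    (κA κB : ℝ) (hκA : 1 ≤ κA) (hκB : 1 ≤ κB)
    (GA : Fin (dA ^ 2 - 1) → Matrix (Fin dA) (Fin dA) ℂ)
    (GB : Fin (dB ^ 2 - 1) → Matrix (Fin dB) (Fin dB) ℂ)
    (hGAtr : ∀ i, (GA i).trace = 0)
    (hGBtr : ∀ j, (GB j).trace = 0)
    (hGAorth : ∀ i j, ((GA i)ᴴ * GA j).trace = if i = j then (κA : ℂ) else 0)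
    (hGBorth : ∀ i j, ((GB i)ᴴ * GB j).trace = if i = j then (κB : ℂ) else 0)
    (hGAspan : ∀ X : Matrix (Fin dA) (Fin dA) ℂ, X.trace = 0 →
      X ∈ Submodule.span ℂ (Set.range GA))
    (hGBspan : ∀ X : Matrix (Fin dB) (Fin dB) ℂ, X.trace = 0 →
      X ∈ Submodule.span ℂ (Set.range GB))
    (ρ : Matrix (Fin dA × Fin dB) (Fin dA × Fin dB) ℂ)
    (hsep : IsSeparableState dA dB ρ)
    (r : Fin (dA ^ 2 - 1) → ℂ) (s : Fin (dB ^ 2 - 1) → ℂ)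
    (T : Matrix (Fin (dA ^ 2 - 1)) (Fin (dB ^ 2 - 1)) ℂ)
    (hexp : ρ =
      ((dA : ℂ)⁻¹ • (1 : Matrix (Fin dA) (Fin dA) ℂ)) ⊗ₖ
        ((dB : ℂ)⁻¹ • (1 : Matrix (Fin dB) (Fin dB) ℂ))
      + ∑ i, r i • (GA i ⊗ₖ ((dB : ℂ)⁻¹ • (1 : Matrix (Fin dB) (Fin dB) ℂ)))
      + ∑ j, s j • (((dA : ℂ)⁻¹ • (1 : Matrix (Fin dA) (Fin dA) ℂ)) ⊗ₖ GB j)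
      + ∑ i, ∑ j, T i j • (GA i ⊗ₖ GB j))
 :
    traceNorm T ≤
      Real.sqrt (((dA : ℝ) - 1) * ((dB : ℝ) - 1) / (κA * κB * dA * dB)) ∧
    traceNorm T ≤ 1 := by
  obtain ⟨N, p, ρA, ρB, hp, hpsum, hρA, hρB, rfl⟩ := hsep
  have hκA0 : 0 < κA := by linarith
  have hκB0 : 0 < κB := by linarith
  have hbA := fun n => (hρA n).norm_blochVector_le hκA0 hGAtr hGAorth hGAspan
  have hbB := fun n => (hρB n).norm_blochVector_le hκB0 hGBtr hGBorth hGBspan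
  simp only [Fintype.card_fin] at hbA hbB
  have hbound := correlation_eq_sum_vecMulVec_blochVector hκA0.ne' hκB0.ne' hGAtr hGBtr hGAorth
    hGBorth p ρA ρB _ _ r s T hexp ▸ traceNorm_sum_smul_vecMulVec_le hp hpsum hbA hbB
  refine ⟨hbound.trans_eq ?_, hbound.trans ?_⟩
  · rw [← Real.sqrt_mul (sub_one_div_mul_nonneg dA hκA0.le), div_mul_div_comm]
    congr 2
    ring
  · exact mul_le_one₀ (Real.sqrt_le_one.mpr (sub_one_div_mul_le_one dA hκA)) (Real.sqrt_nonneg _)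
      (Real.sqrt_le_one.mpr (sub_one_div_mul_le_one dB hκB))

/-- **CCNR-type bound**: for a separable bipartite density matrix the correlation matrix
satisfies `‖T‖_tr ≤ √((d_A − 1)(d_B − 1)/(κ_A κ_B d_A d_B)) ≤ 1`. -/
theorem traceNorm_correlation_matrix_le_of_separable
    (dA dB : ℕ) (hdA : 2 ≤ dA) (hdB : 2 ≤ dB)
    (κA κB : ℝ) (hκA : 1 ≤ κA) (hκB : 1 ≤ κB)
    (GA : Fin (dA ^ 2 - 1) → Matrix (Fin dA) (Fin dA) ℂ)
    (GB : Fin (dB ^ 2 - 1) → Matrix (Fin dB) (Fin dB) ℂ)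
    (hGAtr : ∀ i, (GA i).trace = 0)
    (hGBtr : ∀ j, (GB j).trace = 0)
    (hGAorth : ∀ i j, ((GA i)ᴴ * GA j).trace = if i = j then (κA : ℂ) else 0)
    (hGBorth : ∀ i j, ((GB i)ᴴ * GB j).trace = if i = j then (κB : ℂ) else 0)
    (hGAspan : ∀ X : Matrix (Fin dA) (Fin dA) ℂ, X.trace = 0 →
      X ∈ Submodule.span ℂ (Set.range GA))
    (hGBspan : ∀ X : Matrix (Fin dB) (Fin dB) ℂ, X.trace = 0 →
      X ∈ Submodule.span ℂ (Set.range GB))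
    (ρ : Matrix (Fin dA × Fin dB) (Fin dA × Fin dB) ℂ)
    (hρ : IsDensityMatrix ρ)
    (hsep : IsSeparableState dA dB ρ)
    (r : Fin (dA ^ 2 - 1) → ℂ) (s : Fin (dB ^ 2 - 1) → ℂ)
    (T : Matrix (Fin (dA ^ 2 - 1)) (Fin (dB ^ 2 - 1)) ℂ)
    (hexp : ρ =
      ((dA : ℂ)⁻¹ • (1 : Matrix (Fin dA) (Fin dA) ℂ)) ⊗ₖ
        ((dB : ℂ)⁻¹ • (1 : Matrix (Fin dB) (Fin dB) ℂ))
      + ∑ i, r i • (GA i ⊗ₖ ((dB : ℂ)⁻¹ • (1 : Matrix (Fin dB) (Fin dB) ℂ)))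
      + ∑ j, s j • (((dA : ℂ)⁻¹ • (1 : Matrix (Fin dA) (Fin dA) ℂ)) ⊗ₖ GB j)
      + ∑ i, ∑ j, T i j • (GA i ⊗ₖ GB j))
 :
    traceNorm T ≤
      Real.sqrt (((dA : ℝ) - 1) * ((dB : ℝ) - 1) / (κA * κB * dA * dB)) ∧
    traceNorm T ≤ 1 :=
  traceNorm_correlation_matrix_le_of_separable_general dA dB κA κB hκA hκB GA GB hGAtr hGBtr hGAorth
    hGBorth hGAspan hGBspan ρ hsep r s T hexp
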